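/- arXiv:2501.04554 — 3 statements merged into one kernel-verified Lean document; each statement's English description precedes it below -/
import Mathlib

section
/- Assume in addition that there exist θ₀ > 0 and β > 2 such that P(X > t) ≥ θ₀ t^{−β} for all t ≥ 1. Then for every b ≥ 0 and a > c√b there exist θ₁ > 0 and n₀ ∈ ℕ such that P(T_{a,b} > n) ≥ θ₁ n^{−β/2} for all n ≥ n₀. -/
open MeasureTheory ProbabilityTheory Real Set Filter
open scoped ENNReal NNReal ProbabilityTheory

noncomputable section

/-- Auxiliary recursion defining the functions `ψ_p`. -/
def psiAux : ℕ → ℝ → ℝ → ℝ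
  | 0, p, x => (Real.Gamma (-p))⁻¹ *
      ∫ s in Set.Ioi (0 : ℝ), Real.exp (-x * s - s ^ 2 / 2) * s ^ (-p - 1)
  | (n + 1), p, x =>
      if p < 0 then
        (Real.Gamma (-p))⁻¹ *
          ∫ s in Set.Ioi (0 : ℝ), Real.exp (-x * s - s ^ 2 / 2) * s ^ (-p - 1)
      else x * psiAux n (p - 1) x + (1 - p) * psiAux n (p - 2) x

/-- `ψ_p(x)`: for `p < 0` given by the integral representation
`ψ_p(x) = Γ(-p)⁻¹ ∫₀^∞ exp(-xs - s²/2) s^{-p-1} ds`; for `p ≥ 0` defined by iterating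
the recurrence `ψ_p(x) = x ψ_{p-1}(x) + (1-p) ψ_{p-2}(x)`. -/
def psi (p x : ℝ) : ℝ := psiAux (⌈p⌉₊ + 1) p x

/-- `V_p(x,t) = t^{p/2} ψ_p(x/√t)` for `t > 0`, and `V_p(x,0) = x^p`. -/
def V (p x t : ℝ) : ℝ :=
  if t = 0 then x ^ p else t ^ (p / 2) * psi p (x / Real.sqrt t)

/-- `c(p)`: the largest real zero of `ψ_p`. -/
def cRoot (p : ℝ) : ℝ := sSup {x : ℝ | psi p x = 0}

/-- `p(c)`: the minimal positive root of `p ↦ ψ_p(c)`. -/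
def pRoot (c : ℝ) : ℝ := sInf {p : ℝ | 0 < p ∧ psi p c = 0}

/-- `V̄_p(x,t) = V_p(x,t)` if `x ≥ c(p)√t`, and `0` otherwise. -/
def Vbar (p x t : ℝ) : ℝ := if cRoot p * Real.sqrt t ≤ x then V p x t else 0

variable {Ω : Type*}

/-- The random walk `S(n) = X₁ + ⋯ + Xₙ` (with increments `X 0, X 1, …`). -/
def S (X : ℕ → Ω → ℝ) (n : ℕ) (ω : Ω) : ℝ := ∑ i ∈ Finset.range n, X i ω

/-- The stopping time `T_{a,b} = inf {n ≥ 1 : a + S(n) ≤ c √(n+b)}`, valued in `ℕ∞`. -/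
def hitT (c a b : ℝ) (X : ℕ → Ω → ℝ) (ω : Ω) : ℕ∞ :=
  sInf {m : ℕ∞ | ∃ k : ℕ, m = k ∧ 1 ≤ k ∧ a + S X k ω ≤ c * Real.sqrt ((k : ℝ) + b)}

/-!
A single large first jump suffices. If `X₀ > K√n` and the walk `X₁ + ⋯ + X_k` of the remaining
increments stays in `(-2√n, 2√n)` for `k ≤ n`, then `a + S(k) > c√(k + b)` for `1 ≤ k ≤ n`, once
`K = |c|√(1 + b) + |a| + 2`. The two events are independent. The first has probability at least
`θ₀ K^{-β} n^{-β/2}` by the tail assumption; the second has probability at least `1/2` by Doob's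
maximal inequality for the submartingale `|X₁ + ⋯ + X_k|`, since `E|X₁ + ⋯ + X_n| ≤ √n`.
-/

lemma mul_sqrt_rpow {x y : ℝ} (hx : 0 ≤ x) (hy : 0 ≤ y) (p : ℝ) :
    (x * √y) ^ p = x ^ p * y ^ (p / 2) := by
  rw [Real.mul_rpow hx (Real.sqrt_nonneg y), Real.sqrt_eq_rpow, ← Real.rpow_mul hy,
    one_div_mul_eq_div]

lemma mul_sqrt_add_lt_add_add {a b c k n w x L : ℝ} (hb : 0 ≤ b) (hn : 1 ≤ n) (hk : k ≤ n)
    (hw : |w| < L * √n) (hx : (|c| * √(1 + b) + |a| + L) * √n < x) :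
    c * √(k + b) < a + (w + x) := by
  have hsqrt_n : 1 ≤ √n := Real.one_le_sqrt.mpr hn
  have hc : c * √(k + b) ≤ |c| * √(1 + b) * √n := calc
    c * √(k + b) ≤ |c| * √(k + b) := mul_le_mul_of_nonneg_right (le_abs_self c) (sqrt_nonneg _)
    _ ≤ |c| * √((1 + b) * n) := by gcongr; nlinarith
    _ = |c| * √(1 + b) * √n := by rw [Real.sqrt_mul (by positivity), mul_assoc]
  have ha : -(|a| * √n) ≤ a := by nlinarith [neg_abs_le a, abs_nonneg a]
  linarith [neg_lt_of_abs_lt hw]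

lemma S_succ (X : ℕ → Ω → ℝ) (k : ℕ) (ω : Ω) :
    S X (k + 1) ω = S (fun j => X (j + 1)) k ω + X 0 ω :=
  Finset.sum_range_succ' _ _

lemma natCast_lt_hitT {c a b : ℝ} {X : ℕ → Ω → ℝ} {ω : Ω} {n : ℕ}
    (h : ∀ k : ℕ, 1 ≤ k → k ≤ n → c * √(k + b) < a + S X k ω) :
    (n : ℕ∞) < hitT c a b X ω := by
  refine (ENat.natCast_lt_natCast.mpr n.lt_succ_self).trans_le (le_sInf ?_)
  rintro _ ⟨k, rfl, hk, hhit⟩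
  by_contra! hkn
  exact (h k hk (Nat.lt_succ_iff.mp (ENat.natCast_lt_natCast.mp hkn))).not_ge hhit

namespace ProbabilityTheory

variable {m : MeasurableSpace Ω} {μ : Measure Ω}

lemma memLp_two_of_integral_sq_ne_zero {f : Ω → ℝ} (hf : AEStronglyMeasurable f μ)
    (h : ∫ ω, f ω ^ 2 ∂μ ≠ 0) : MemLp f 2 μ :=
  (memLp_two_iff_integrable_sq hf).2 (Integrable.of_integral_ne_zero h)

lemma integral_abs_le_sqrt_integral_sq [IsProbabilityMeasure μ] {f : Ω → ℝ}
    (hf : MemLp f 2 μ) : ∫ ω, |f ω| ∂μ ≤ √(∫ ω, f ω ^ 2 ∂μ) := by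
  have h := variance_nonneg |f| μ
  rw [variance_eq_sub hf.abs] at h
  refine Real.le_sqrt_of_sq_le ?_
  simpa [Pi.pow_apply, sq_abs] using h

lemma iIndepFun.integral_sq_sum_eq_card {ι : Type*} {Y : ι → Ω → ℝ} (hindep : iIndepFun Y μ)
    (hL2 : ∀ i, MemLp (Y i) 2 μ) (hmean : ∀ i, ∫ ω, Y i ω ∂μ = 0)
    (hvar : ∀ i, ∫ ω, Y i ω ^ 2 ∂μ = 1) (t : Finset ι) :
    ∫ ω, (∑ i ∈ t, Y i ω) ^ 2 ∂μ = t.card := by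
  have := hindep.isProbabilityMeasure
  have hvariance : variance (∑ i ∈ t, Y i) μ = t.card := by
    rw [IndepFun.variance_sum (fun i _ => hL2 i) fun i _ j _ hij => hindep.indepFun hij]
    have hone : ∀ i, variance (Y i) μ = 1 := fun i => by
      rw [variance_eq_sub (hL2 i)]
      simp [Pi.pow_apply, hvar, hmean]
    simp [hone]
  rw [variance_eq_sub (memLp_finsetSum' t fun i _ => hL2 i)] at hvariance
  simp only [Pi.pow_apply, Finset.sum_apply] at hvariance
  rw [integral_finsetSum t fun i _ => (hL2 i).integrable one_le_two] at hvariance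
  simpa [hmean] using hvariance

lemma iIndepFun.measureReal_preimage_inter_eq_mul {ι β : Type*} [MeasurableSpace β]
    {Y : ι → Ω → β} (hmeas : ∀ i, Measurable (Y i)) (hindep : iIndepFun Y μ) (i : ι)
    {s : Set β} (hs : MeasurableSet s) {B : Set Ω}
    (hB : MeasurableSet[⨆ j ∈ ({i}ᶜ : Set ι), MeasurableSpace.comap (Y j) inferInstance] B) :
    μ.real (Y i ⁻¹' s ∩ B) = μ.real (Y i ⁻¹' s) * μ.real B := by
  have hind : Indep (MeasurableSpace.comap (Y i) inferInstance)
      (⨆ j ∈ ({i}ᶜ : Set ι), MeasurableSpace.comap (Y j) inferInstance) μ := by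
    simpa using indep_iSup_of_disjoint (fun j => (hmeas j).comap_le) hindep.iIndep
      (disjoint_compl_right (a := ({i} : Set ι)))
  simp only [measureReal_def,
    (hind.indepSet_of_measurableSet ⟨s, hs, rfl⟩ hB).measure_inter_eq_mul, ENNReal.toReal_mul]

lemma measurableSet_forall_abs_S_shift_lt (X : ℕ → Ω → ℝ) (n : ℕ) (r : ℝ) :
    MeasurableSet[⨆ j ∈ ({0}ᶜ : Set ℕ), MeasurableSpace.comap (X j) inferInstance]
      {ω | ∀ k ≤ n, |S (fun j => X (j + 1)) k ω| < r} := by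
  set 𝒢 := ⨆ j ∈ ({0}ᶜ : Set ℕ), MeasurableSpace.comap (X j) inferInstance
  have hS : ∀ k, Measurable[𝒢] (S (fun j => X (j + 1)) k) := fun k =>
    Finset.measurable_sum _ fun j _ => (comap_measurable (X (j + 1))).mono
      (le_iSup₂ (f := fun j (_ : j ∈ ({0}ᶜ : Set ℕ)) => MeasurableSpace.comap (X j) _) (j + 1)
        (Nat.succ_ne_zero j)) le_rfl
  simp only [Set.ofPred_forall]
  exact MeasurableSet.iInter fun k => MeasurableSet.iInter fun _ =>
    measurableSet_lt (hS k).abs measurable_const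

lemma iIndepFun.martingale_S_shift {Y : ℕ → Ω → ℝ} (hmeas : ∀ i, Measurable (Y i))
    (hindep : iIndepFun Y μ) (hint : ∀ i, Integrable (Y i) μ)
    (hmean : ∀ i, ∫ ω, Y i ω ∂μ = 0) :
    Martingale (S fun j => Y (j + 1))
      (Filtration.natural Y fun i => (hmeas i).stronglyMeasurable) μ := by
  have := hindep.isProbabilityMeasure
  set ℱ := Filtration.natural Y fun i => (hmeas i).stronglyMeasurable
  have hS : ∀ k, S (fun j => Y (j + 1)) k = ∑ j ∈ Finset.range k, Y (j + 1) := fun k => by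
    ext ω; simp [S]
  have hadapted : StronglyAdapted ℱ (S fun j => Y (j + 1)) := fun k => by
    rw [hS]
    refine Finset.stronglyMeasurable_sum _ fun j hj => ?_
    exact (Filtration.stronglyAdapted_natural _ (j + 1)).mono
      (ℱ.mono (Finset.mem_range.mp hj))
  have hint_S : ∀ k, Integrable (S (fun j => Y (j + 1)) k) μ := fun k => by
    rw [hS]; exact integrable_finsetSum' _ fun j _ => hint (j + 1)
  refine martingale_nat hadapted hint_S fun k => ?_
  have hstep : S (fun j => Y (j + 1)) (k + 1) = S (fun j => Y (j + 1)) k + Y (k + 1) := by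
    rw [hS, hS, Finset.sum_range_succ]
  have hnext : μ[Y (k + 1) | ℱ k] =ᵐ[μ] fun _ => 0 := by
    simpa [hmean] using hindep.condExp_natural_ae_eq_of_lt _ (Nat.lt_succ_self k)
  rw [hstep]
  filter_upwards [condExp_add (m := ℱ k) (hint_S k) (hint (k + 1)), hnext] with ω hadd hzero
  rw [hadd, Pi.add_apply, hzero, condExp_of_stronglyMeasurable (ℱ.le k) (hadapted k) (hint_S k)]
  simp

lemma _root_.MeasureTheory.Martingale.mul_measureReal_exists_abs_ge_le [IsFiniteMeasure μ]
    {M : ℕ → Ω → ℝ} {ℱ : Filtration ℕ m} (hM : Martingale M ℱ μ) {ε : ℝ} (hε : 0 ≤ ε)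
    (n : ℕ) : ε * μ.real {ω | ∃ k ≤ n, ε ≤ |M k ω|} ≤ ∫ ω, |M n ω| ∂μ := by
  have hsub : Submartingale (M ⊔ -M) ℱ μ := hM.submartingale.sup hM.neg.submartingale
  lift ε to ℝ≥0 using hε
  have hdoob := maximal_ineq hsub (fun k ω => abs_nonneg (M k ω)) (ε := ε) n
  have hevent : {ω | (ε : ℝ) ≤ (Finset.range (n + 1)).sup' Finset.nonempty_range_add_one
      fun k => (M ⊔ -M) k ω} = {ω | ∃ k ≤ n, (ε : ℝ) ≤ |M k ω|} := by
    ext ω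
    simp [Finset.le_sup'_iff, abs_eq_max_neg]
  rw [hevent] at hdoob
  have hset_le : ∫ ω in {ω | ∃ k ≤ n, (ε : ℝ) ≤ |M k ω|}, (M ⊔ -M) n ω ∂μ ≤ ∫ ω, |M n ω| ∂μ :=
    setIntegral_le_integral (hM.integrable n).abs (ae_of_all _ fun ω => abs_nonneg (M n ω))
  have hset_nonneg : 0 ≤ ∫ ω in {ω | ∃ k ≤ n, (ε : ℝ) ≤ |M k ω|}, (M ⊔ -M) n ω ∂μ :=
    integral_nonneg fun ω => abs_nonneg (M n ω)
  have hreal := ENNReal.toReal_mono ENNReal.ofReal_ne_top hdoob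
  rw [ENNReal.toReal_mul, ENNReal.toReal_ofReal hset_nonneg] at hreal
  exact hreal.trans hset_le

lemma iIndepFun.one_sub_sqrt_div_le_measureReal_forall_abs_S_shift_lt {Y : ℕ → Ω → ℝ}
    (hmeas : ∀ i, Measurable (Y i)) (hindep : iIndepFun Y μ) (hL2 : ∀ i, MemLp (Y i) 2 μ)
    (hmean : ∀ i, ∫ ω, Y i ω ∂μ = 0) (hvar : ∀ i, ∫ ω, Y i ω ^ 2 ∂μ = 1) (n : ℕ) {ε : ℝ}
    (hε : 0 < ε) :
    1 - √n / ε ≤ μ.real {ω | ∀ k ≤ n, |S (fun j => Y (j + 1)) k ω| < ε} := by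
  have := hindep.isProbabilityMeasure
  set E := {ω | ∃ k ≤ n, ε ≤ |S (fun j => Y (j + 1)) k ω|}
  have hmax := (hindep.martingale_S_shift hmeas (fun i => (hL2 i).integrable one_le_two)
    hmean).mul_measureReal_exists_abs_ge_le hε.le n
  have hL1 : ∫ ω, |S (fun j => Y (j + 1)) n ω| ∂μ ≤ √n := by
    refine (integral_abs_le_sqrt_integral_sq
      (memLp_finsetSum (Finset.range n) fun j _ => hL2 (j + 1))).trans_eq ?_
    rw [(hindep.precomp (add_left_injective 1)).integral_sq_sum_eq_card (fun j => hL2 (j + 1))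
      (fun j => hmean (j + 1)) (fun j => hvar (j + 1)), Finset.card_range]
  have hE : μ.real E ≤ √n / ε := by
    rw [le_div_iff₀ hε, mul_comm]
    exact hmax.trans hL1
  have hcover : 1 ≤ μ.real E + μ.real Eᶜ := by
    simpa [Set.union_compl_self] using measureReal_union_le (μ := μ) E Eᶜ
  have hcompl : Eᶜ = {ω | ∀ k ≤ n, |S (fun j => Y (j + 1)) k ω| < ε} := by
    ext ω; simp [E]
  rw [← hcompl]
  linarith

end ProbabilityTheory

theorem tail_lower_bound_heavy_tail_general
    [MeasureSpace Ω] [IsProbabilityMeasure (ℙ : Measure Ω)]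
    (X : ℕ → Ω → ℝ) (c θ₀ β : ℝ) (hθ₀ : 0 < θ₀)
    (hmeas : ∀ i, Measurable (X i))
    (hindep : iIndepFun X ℙ)
    (hident : ∀ i, IdentDistrib (X i) (X 0) ℙ ℙ)
    (hmean : ∫ ω, X 0 ω ∂ℙ = 0)
    (hvar : ∫ ω, (X 0 ω) ^ 2 ∂ℙ = 1)
    (htail : ∀ t : ℝ, 1 ≤ t → θ₀ * t ^ (-β) ≤ (ℙ {ω | t < X 0 ω}).toReal) :
    ∀ b : ℝ, 0 ≤ b → ∀ a : ℝ, c * Real.sqrt b < a →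
      ∃ θ₁ : ℝ, 0 < θ₁ ∧ ∃ n₀ : ℕ, ∀ n : ℕ, n₀ ≤ n →
        θ₁ * (n : ℝ) ^ (-β / 2) ≤ (ℙ {ω | (n : ℕ∞) < hitT c a b X ω}).toReal := by
  intro b hb a _
  have hL2 : ∀ i, MemLp (X i) 2 ℙ := fun i => (hident i).symm.memLp_snd <|
    memLp_two_of_integral_sq_ne_zero (hmeas 0).aestronglyMeasurable (by simp [hvar])
  have hmean' : ∀ i, ∫ ω, X i ω ∂ℙ = 0 := fun i => (hident i).integral_eq.trans hmean
  have hvar' : ∀ i, ∫ ω, X i ω ^ 2 ∂ℙ = 1 := fun i =>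
    ((hident i).comp (measurable_id.pow_const 2)).integral_eq.trans hvar
  set K := |c| * √(1 + b) + |a| + 2
  have hK : 2 ≤ K := le_add_of_nonneg_left (by positivity)
  refine ⟨θ₀ * K ^ (-β) / 2, by positivity, 1, fun n hn => ?_⟩
  have hn' : (1 : ℝ) ≤ n := by exact_mod_cast hn
  set A := {ω | K * √n < X 0 ω}
  set B := {ω | ∀ k ≤ n, |S (fun j => X (j + 1)) k ω| < 2 * √n}
  have hAB : A ∩ B ⊆ {ω | (n : ℕ∞) < hitT c a b X ω} := by
    rintro ω ⟨hA, hB⟩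
    refine natCast_lt_hitT fun k hk hkn => ?_
    obtain ⟨k, rfl⟩ := Nat.exists_eq_add_of_le' hk
    rw [S_succ]
    exact mul_sqrt_add_lt_add_add hb hn' (by exact_mod_cast hkn) (hB k (by omega)) hA
  have hPA : θ₀ * K ^ (-β) * n ^ (-β / 2) ≤ (ℙ A).toReal := by
    have h := htail (K * √n) (by nlinarith [Real.one_le_sqrt.mpr hn'])
    rwa [mul_sqrt_rpow (by positivity) n.cast_nonneg, ← mul_assoc] at h
  have hPB : 1 / 2 ≤ (ℙ B).toReal := by
    have h := hindep.one_sub_sqrt_div_le_measureReal_forall_abs_S_shift_lt hmeas hL2 hmean'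
      hvar' n (by positivity : 0 < 2 * √(n : ℝ))
    rwa [div_mul_cancel_right₀ (by positivity), show (1 : ℝ) - 2⁻¹ = 1 / 2 by norm_num] at h
  calc θ₀ * K ^ (-β) / 2 * n ^ (-β / 2) = θ₀ * K ^ (-β) * n ^ (-β / 2) * (1 / 2) := by ring
    _ ≤ (ℙ A).toReal * (ℙ B).toReal := mul_le_mul hPA hPB (by norm_num) ENNReal.toReal_nonneg
    _ = (ℙ (A ∩ B)).toReal := (hindep.measureReal_preimage_inter_eq_mul hmeas 0 measurableSet_Ioi
        (measurableSet_forall_abs_S_shift_lt X n _)).symm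
    _ ≤ (ℙ {ω | (n : ℕ∞) < hitT c a b X ω}).toReal := measureReal_mono hAB

/-- Lower bound for walks with heavy right tails: if `P(X > t) ≥ θ₀ t^{-β}` for `t ≥ 1`
with `β > 2`, then `P(T_{a,b} > n) ≥ θ₁ n^{-β/2}` for all large `n`. -/
theorem tail_lower_bound_heavy_tail
    [MeasureSpace Ω] [IsProbabilityMeasure (ℙ : Measure Ω)]
    (X : ℕ → Ω → ℝ) (c θ₀ β : ℝ) (hθ₀ : 0 < θ₀) (hβ : 2 < β)
    (hmeas : ∀ i, Measurable (X i))
    (hindep : iIndepFun X ℙ)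
    (hident : ∀ i, IdentDistrib (X i) (X 0) ℙ ℙ)
    (hmean : ∫ ω, X 0 ω ∂ℙ = 0)
    (hvar : ∫ ω, (X 0 ω) ^ 2 ∂ℙ = 1)
    (htail : ∀ t : ℝ, 1 ≤ t → θ₀ * t ^ (-β) ≤ (ℙ {ω | t < X 0 ω}).toReal) :
    ∀ b : ℝ, 0 ≤ b → ∀ a : ℝ, c * Real.sqrt b < a →
      ∃ θ₁ : ℝ, 0 < θ₁ ∧ ∃ n₀ : ℕ, ∀ n : ℕ, n₀ ≤ n →
        θ₁ * (n : ℝ) ^ (-β / 2) ≤ (ℙ {ω | (n : ℕ∞) < hitT c a b X ω}).toReal :=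
  tail_lower_bound_heavy_tail_general X c θ₀ β hθ₀ hmeas hindep hident hmean hvar htail
end
end

section
/- For every q < 0 and every T > 0 there exists a constant A > 0 such that V_q(x,t) ≤ A (x + T√t)^q for all t > 0 and all x > −T√t. -/
open MeasureTheory ProbabilityTheory Real Set Filter
open scoped ENNReal NNReal ProbabilityTheory

noncomputable section

variable {Ω : Type*}

/-! For `q < 0`, `ψ_q` is a Gamma-type integral. Completing the square,
`-ys - s²/2 ≤ T²/2 - (y + T)s`, so the Gaussian factor is dominated by `e^{T²/2}` times an
exponential, whose integral against `s^{-q-1}` is `Γ(-q) (y + T)^q`. Hence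
`ψ_q(y) ≤ e^{T²/2} (y + T)^q` for `y > -T`, and the scaling `x = y√t` turns this into the bound
on `V_q` with `A = e^{T²/2}`. -/

theorem psi_of_neg {p : ℝ} (hp : p < 0) (x : ℝ) :
    psi p x = (Gamma (-p))⁻¹ * ∫ s in Ioi (0 : ℝ), exp (-x * s - s ^ 2 / 2) * s ^ (-p - 1) := by
  rw [psi, Nat.ceil_eq_zero.mpr hp.le, psiAux, if_pos hp]

theorem exp_neg_mul_sub_sq_half_le (x c s : ℝ) :
    exp (-x * s - s ^ 2 / 2) ≤ exp (c ^ 2 / 2) * exp (-((x + c) * s)) := by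
  rw [← exp_add, exp_le_exp]
  nlinarith [sq_nonneg (s - c)]

theorem integral_exp_neg_mul_sub_sq_half_mul_rpow_Ioi_le {a x c : ℝ} (ha : 0 < a)
    (hxc : 0 < x + c) :
    ∫ s in Ioi (0 : ℝ), exp (-x * s - s ^ 2 / 2) * s ^ (a - 1)
      ≤ exp (c ^ 2 / 2) * ((1 / (x + c)) ^ a * Gamma a) := by
  have hGamma := integral_rpow_mul_exp_neg_mul_Ioi ha hxc
  have hint : IntegrableOn (fun s : ℝ => s ^ (a - 1) * exp (-((x + c) * s))) (Ioi 0) :=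
    Integrable.of_integral_ne_zero <| hGamma ▸
      (mul_pos (rpow_pos_of_pos (one_div_pos.2 hxc) a) (Gamma_pos_of_pos ha)).ne'
  rw [← hGamma, ← integral_const_mul]
  refine integral_mono_of_nonneg (ae_restrict_of_forall_mem measurableSet_Ioi fun s hs => ?_)
    (hint.const_mul _) (ae_restrict_of_forall_mem measurableSet_Ioi fun s hs => ?_)
  · exact mul_nonneg (exp_pos _).le (rpow_nonneg (le_of_lt hs) _)
  · calc exp (-x * s - s ^ 2 / 2) * s ^ (a - 1)
        ≤ exp (c ^ 2 / 2) * exp (-((x + c) * s)) * s ^ (a - 1) :=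
          mul_le_mul_of_nonneg_right (exp_neg_mul_sub_sq_half_le x c s)
            (rpow_nonneg (le_of_lt hs) _)
      _ = exp (c ^ 2 / 2) * (s ^ (a - 1) * exp (-((x + c) * s))) := by ring

theorem psi_le_exp_mul_rpow {p x c : ℝ} (hp : p < 0) (hxc : 0 < x + c) :
    psi p x ≤ exp (c ^ 2 / 2) * (x + c) ^ p := by
  have hG : 0 < Gamma (-p) := Gamma_pos_of_pos (neg_pos.2 hp)
  calc psi p x ≤ (Gamma (-p))⁻¹ * (exp (c ^ 2 / 2) * ((1 / (x + c)) ^ (-p) * Gamma (-p))) := by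
        rw [psi_of_neg hp]
        exact mul_le_mul_of_nonneg_left
          (integral_exp_neg_mul_sub_sq_half_mul_rpow_Ioi_le (neg_pos.2 hp) hxc)
          (inv_nonneg.2 hG.le)
    _ = exp (c ^ 2 / 2) * (x + c) ^ p := by
        rw [one_div, inv_rpow hxc.le, rpow_neg hxc.le, inv_inv]
        field_simp

theorem V_negative_index_bound_general (q T : ℝ) (hq : q < 0) :
    ∃ A : ℝ, 0 < A ∧ ∀ t : ℝ, 0 < t → ∀ x : ℝ, -T * Real.sqrt t < x →
      V q x t ≤ A * (x + T * Real.sqrt t) ^ q := by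
  refine ⟨exp (T ^ 2 / 2), exp_pos _, fun t ht x hx => ?_⟩
  have hst : 0 < √t := sqrt_pos.2 ht
  have hscale : √t * (x / √t + T) = x + T * √t := by field_simp
  have hy : 0 < x / √t + T := pos_of_mul_pos_right (hscale ▸ by linarith) hst.le
  calc V q x t = t ^ (q / 2) * psi q (x / √t) := if_neg ht.ne'
    _ ≤ t ^ (q / 2) * (exp (T ^ 2 / 2) * (x / √t + T) ^ q) :=
        mul_le_mul_of_nonneg_left (psi_le_exp_mul_rpow hq hy) (by positivity)
    _ = exp (T ^ 2 / 2) * (x + T * √t) ^ q := by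
        rw [rpow_div_two_eq_sqrt q ht.le, mul_left_comm, ← mul_rpow hst.le hy.le, hscale]

/-- Lemma 3: for `q < 0`, `V_q(x,t) ≤ A (x + T√t)^q` on `x > -T√t`. -/
theorem V_negative_index_bound (q T : ℝ) (hq : q < 0) (hT : 0 < T) :
    ∃ A : ℝ, 0 < A ∧ ∀ t : ℝ, 0 < t → ∀ x : ℝ, -T * Real.sqrt t < x →
      V q x t ≤ A * (x + T * Real.sqrt t) ^ q :=
  V_negative_index_bound_general q T hq
end
end

section
/- For every p ∈ (0,1) there exists a constant A(p) > 0 such that V_p(x,t) ≤ A(p) (x − c(p)√t)^p for all t > 0 and all x ≥ c(p)√t. -/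
open MeasureTheory ProbabilityTheory Real Set Filter
open scoped ENNReal NNReal ProbabilityTheory

noncomputable section

variable {Ω : Type*}

/-!
For `q < 0`, `ψ_q` is a positive multiple of `∫₀^∞ e^{-xs-s²/2} s^{-q-1} ds`, hence positive, and
integration by parts gives `ψ_q' = q ψ_{q-1}` and the recurrence `ψ_q = x ψ_{q-1} + (1-q) ψ_{q-2}`.
For `p ∈ (0,1)` it follows that `ψ_p' = p ψ_{p-1}` is positive and decreasing, so `ψ_p` is increasing
and concave and positive on `[0, ∞)`. Concavity puts `ψ_p` below its tangents: the tangent at `0`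
forces a zero, so `c = c(p) ≤ 0` is a root, and the tangent at `c` gives `ψ_p(y) ≤ M (y - c)`,
which is `O((y - c)^p)` for `y ≤ 1`. For `y ≥ 1`, dropping `e^{-s²/2}` turns the integrals into
Gamma integrals, `ψ_q(y) ≤ y^q`, so `ψ_p(y) ≤ 2 y^p ≤ 2 (y - c)^p`. The scaling
`V_p(x,t) = t^{p/2} ψ_p(x/√t)` transfers the bound from `ψ_p` to `V_p`.
-/

open Topology

def psiIntegral (x r : ℝ) : ℝ :=
  ∫ s in Ioi (0 : ℝ), Real.exp (-x * s - s ^ 2 / 2) * s ^ r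

lemma continuousOn_psiIntegrand (x r : ℝ) :
    ContinuousOn (fun s : ℝ => Real.exp (-x * s - s ^ 2 / 2) * s ^ r) (Ioi 0) :=
  (by fun_prop : Continuous fun s : ℝ => Real.exp (-x * s - s ^ 2 / 2)).continuousOn.mul
    fun s hs => (continuousAt_rpow_const s r (Or.inl (ne_of_gt hs))).continuousWithinAt

section PsiIntegral

variable {r : ℝ}

lemma integrableOn_psiIntegrand (hr : -1 < r) (x : ℝ) :
    IntegrableOn (fun s : ℝ => Real.exp (-x * s - s ^ 2 / 2) * s ^ r) (Ioi 0) := by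
  -- `-x s - s²/2 ≤ x² - s²/4`
  refine ((integrableOn_rpow_mul_exp_neg_mul_sq (b := 1 / 4) (by norm_num) hr).const_mul
    (Real.exp (x ^ 2))).mono' ((continuousOn_psiIntegrand x r).aestronglyMeasurable
      measurableSet_Ioi) ?_
  filter_upwards [ae_restrict_mem measurableSet_Ioi] with s (hs : 0 < s)
  rw [Real.norm_of_nonneg (by positivity), mul_comm (s ^ r), ← mul_assoc, ← Real.exp_add]
  gcongr
  nlinarith [sq_nonneg (x + s / 2)]

lemma psiIntegral_pos (hr : -1 < r) (x : ℝ) : 0 < psiIntegral x r := by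
  refine (setIntegral_pos_iff_support_of_nonneg_ae ?_ (integrableOn_psiIntegrand hr x)).2 ?_
  · filter_upwards [ae_restrict_mem measurableSet_Ioi] with s (hs : 0 < s)
    positivity
  · have : (Function.support fun s : ℝ => Real.exp (-x * s - s ^ 2 / 2) * s ^ r) ∩ Ioi 0
        = Ioi 0 :=
      inter_eq_right.2 fun s (hs : 0 < s) => Function.mem_support.2 (by positivity)
    rw [this, Real.volume_Ioi]
    exact ENNReal.zero_lt_top

lemma hasDerivAt_psiIntegral (hr : -1 < r) (x : ℝ) :
    HasDerivAt (psiIntegral · r) (-psiIntegral x (r + 1)) x := by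
  have key := hasDerivAt_integral_of_dominated_loc_of_deriv_le
    (μ := volume.restrict (Ioi (0:ℝ)))
    (F := fun y s => Real.exp (-y * s - s ^ 2 / 2) * s ^ r)
    (F' := fun y s => -(Real.exp (-y * s - s ^ 2 / 2) * s ^ (r + 1)))
    (bound := fun s => Real.exp (-(-(|x| + 1)) * s - s ^ 2 / 2) * s ^ (r + 1))
    (Metric.ball_mem_nhds x one_pos)
    (Eventually.of_forall fun y =>
      (continuousOn_psiIntegrand y r).aestronglyMeasurable measurableSet_Ioi)
    (integrableOn_psiIntegrand hr x)
    ((continuousOn_psiIntegrand x (r + 1)).aestronglyMeasurable measurableSet_Ioi).neg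
    ?_ (integrableOn_psiIntegrand (by linarith) (-(|x| + 1))) ?_
  · have h := key.2
    rw [integral_neg] at h
    exact h
  · filter_upwards [ae_restrict_mem measurableSet_Ioi] with s (hs : 0 < s) y hy
    have hy' : -(|x| + 1) ≤ y := by
      rw [Metric.mem_ball, Real.dist_eq] at hy
      linarith [(abs_lt.1 hy).1, neg_abs_le x]
    rw [norm_neg, Real.norm_of_nonneg (by positivity)]
    gcongr
  · filter_upwards [ae_restrict_mem measurableSet_Ioi] with s (hs : 0 < s) y _
    refine ((((hasDerivAt_id y).neg.mul_const s).sub_const (s ^ 2 / 2)).exp.mul_const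
      (s ^ r)).congr_deriv ?_
    rw [Real.rpow_add hs, Real.rpow_one]
    simp only [Pi.neg_apply, id]
    ring

/-- Integration by parts against `d(e^{-xs-s²/2}) = -(x+s) e^{-xs-s²/2} ds`. -/
lemma psiIntegral_recurrence (hr : 0 < r) (x : ℝ) :
    x * psiIntegral x r + psiIntegral x (r + 1) = r * psiIntegral x (r - 1) := by
  set e : ℝ → ℝ := fun s => Real.exp (-x * s - s ^ 2 / 2) with he
  have hF : ∀ q, psiIntegral x q = ∫ s in Ioi 0, e s * s ^ q := fun _ => rfl
  have hu : ∀ s ∈ Ioi (0:ℝ), HasDerivAt e ((-x - s) * e s) s := fun s _ => by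
    have h : HasDerivAt (fun s : ℝ => -x * s - s ^ 2 / 2) (-x - s) s :=
      (((hasDerivAt_id s).const_mul (-x)).sub ((hasDerivAt_pow 2 s).div_const 2)).congr_deriv
        (by norm_num)
    exact h.exp.congr_deriv (mul_comm _ _)
  have hv : ∀ s ∈ Ioi (0:ℝ), HasDerivAt (· ^ r) (r * s ^ (r - 1)) s := fun s (hs : 0 < s) =>
    hasDerivAt_rpow_const (Or.inl hs.ne')
  have int0 : IntegrableOn (fun s => e s * s ^ r) (Ioi 0) :=
    integrableOn_psiIntegrand (by linarith) x
  have int1 : IntegrableOn (fun s => e s * s ^ (r + 1)) (Ioi 0) :=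
    integrableOn_psiIntegrand (by linarith) x
  have int2 : IntegrableOn (fun s => e s * s ^ (r - 1)) (Ioi 0) :=
    integrableOn_psiIntegrand (by linarith) x
  have intL : IntegrableOn (fun s => x * (e s * s ^ r) + e s * s ^ (r + 1)) (Ioi 0) :=
    (int0.const_mul x).add int1
  have hsplit : ∀ s ∈ Ioi (0:ℝ), (-x - s) * e s * s ^ r + e s * (r * s ^ (r - 1))
      = r * (e s * s ^ (r - 1)) - (x * (e s * s ^ r) + e s * s ^ (r + 1)) :=
    fun s (hs : 0 < s) => by
      rw [Real.rpow_add hs, Real.rpow_one]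
      ring
  have hzero : Tendsto (fun s => e s * s ^ r) (𝓝[>] 0) (𝓝 0) := by
    have : ContinuousAt (fun s => e s * s ^ r) 0 :=
      (by fun_prop : Continuous e).continuousAt.mul (continuousAt_rpow_const 0 r (Or.inr hr.le))
    simpa [e, Real.zero_rpow hr.ne'] using this.tendsto.mono_left nhdsWithin_le_nhds
  have hinfty : Tendsto (fun s => e s * s ^ r) atTop (𝓝 0) := by
    refine squeeze_zero' ?_ ?_ (tendsto_rpow_mul_exp_neg_mul_atTop_nhds_zero r 1 one_pos)
    · filter_upwards [eventually_gt_atTop 0] with s hs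
      positivity
    · filter_upwards [eventually_ge_atTop (2 * (1 - x)), eventually_gt_atTop 0] with s h1 h2
      simp only [he]
      rw [mul_comm (s ^ r)]
      gcongr
      nlinarith
  have h := integral_Ioi_deriv_mul_eq_sub hu hv
    (IntegrableOn.congr_fun ((int2.const_mul r).sub intL) (fun s hs => (hsplit s hs).symm)
      measurableSet_Ioi) hzero hinfty
  rw [setIntegral_congr_fun measurableSet_Ioi hsplit, integral_sub (int2.const_mul r) intL,
    integral_add (int0.const_mul x) int1, integral_const_mul, integral_const_mul] at h
  rw [hF, hF, hF]
  linarith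

lemma psiIntegral_le (hr : -1 < r) {x : ℝ} (hx : 0 < x) :
    psiIntegral x r ≤ Real.Gamma (r + 1) * x ^ (-(r + 1)) := by
  have hgamma := integral_rpow_mul_exp_neg_mul_Ioi (by linarith : 0 < r + 1) hx
  rw [add_sub_cancel_right, one_div, Real.inv_rpow hx.le, ← Real.rpow_neg hx.le] at hgamma
  rw [mul_comm, ← hgamma]
  refine setIntegral_mono_on (integrableOn_psiIntegrand hr x) ?_ measurableSet_Ioi
    fun s (hs : 0 < s) => ?_
  · simpa [Real.rpow_one] using integrableOn_rpow_mul_exp_neg_mul_rpow hr one_pos hx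
  · rw [mul_comm (s ^ r)]
    gcongr
    nlinarith

end PsiIntegral

lemma le_add_mul_sub_of_hasDerivAt_of_antitone {f f' : ℝ → ℝ} (hf : ∀ x, HasDerivAt f (f' x) x)
    (hf' : Antitone f') (a y : ℝ) : f y ≤ f a + f' a * (y - a) := by
  have hconc : ConcaveOn ℝ univ f := by
    refine Antitone.concaveOn_univ_of_deriv (fun x => (hf x).differentiableAt) ?_
    rwa [show deriv f = f' from funext fun x => (hf x).deriv]
  rcases lt_trichotomy a y with hay | rfl | hya
  · have h := hconc.slope_le_of_hasDerivAt (mem_univ a) (mem_univ y) hay (hf a)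
    rw [slope_def_field, div_le_iff₀ (sub_pos.2 hay)] at h
    linarith
  · simp
  · have h := hconc.le_slope_of_hasDerivAt (mem_univ y) (mem_univ a) hya (hf a)
    rw [slope_def_field, le_div_iff₀ (sub_pos.2 hya)] at h
    linarith

lemma le_rpow_one_sub_mul_rpow {u b p : ℝ} (hu : 0 ≤ u) (hub : u ≤ b) (hp : p ≤ 1) :
    u ≤ b ^ (1 - p) * u ^ p := by
  rcases hu.eq_or_lt with rfl | hu
  · exact mul_nonneg (Real.rpow_nonneg hub _) (Real.rpow_nonneg le_rfl _)
  · calc u = u ^ (1 - p) * u ^ p := by rw [← Real.rpow_add hu, sub_add_cancel, Real.rpow_one]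
      _ ≤ b ^ (1 - p) * u ^ p := by gcongr

section Psi

variable {q : ℝ}

lemma psiAux_of_neg (n : ℕ) (hq : q < 0) (x : ℝ) :
    psiAux n q x = (Real.Gamma (-q))⁻¹ * psiIntegral x (-q - 1) := by
  cases n <;> simp [psiAux, hq, psiIntegral]

lemma psi_of_neg_s6 (hq : q < 0) (x : ℝ) :
    psi q x = (Real.Gamma (-q))⁻¹ * psiIntegral x (-q - 1) :=
  psiAux_of_neg _ hq x

lemma psi_pos_of_neg (hq : q < 0) (x : ℝ) : 0 < psi q x := by
  rw [psi_of_neg_s6 hq]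
  have := Real.Gamma_pos_of_pos (neg_pos.2 hq)
  have := psiIntegral_pos (by linarith : -1 < -q - 1) x
  positivity

lemma psi_le_rpow_of_neg (hq : q < 0) {y : ℝ} (hy : 0 < y) : psi q y ≤ y ^ q := by
  have hΓ := Real.Gamma_pos_of_pos (neg_pos.2 hq)
  calc psi q y ≤ (Real.Gamma (-q))⁻¹ * (Real.Gamma (-q - 1 + 1) * y ^ (-(-q - 1 + 1))) := by
        rw [psi_of_neg_s6 hq]
        gcongr
        exact psiIntegral_le (by linarith) hy
    _ = y ^ q := by
        rw [sub_add_cancel, neg_neg]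
        field_simp

lemma hasDerivAt_psi_of_neg (hq : q < 0) (x : ℝ) :
    HasDerivAt (psi q) (q * psi (q - 1) x) x := by
  rw [show psi q = fun y => (Real.Gamma (-q))⁻¹ * psiIntegral y (-q - 1) from
    funext (psi_of_neg_s6 hq), psi_of_neg_s6 (by linarith : q - 1 < 0), show -(q - 1) = -q + 1 by ring,
    add_sub_cancel_right, Real.Gamma_add_one (neg_ne_zero.2 hq.ne)]
  refine ((hasDerivAt_psiIntegral (by linarith : -1 < -q - 1) x).const_mul _).congr_deriv ?_
  rw [sub_add_cancel]
  have := (Real.Gamma_pos_of_pos (neg_pos.2 hq)).ne'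
  have := hq.ne
  field_simp

lemma psi_antitone_of_neg (hq : q < 0) : Antitone (psi q) :=
  antitone_of_deriv_nonpos (fun x => (hasDerivAt_psi_of_neg hq x).differentiableAt) fun x => by
    rw [(hasDerivAt_psi_of_neg hq x).deriv]
    nlinarith [psi_pos_of_neg (by linarith : q - 1 < 0) x]

lemma psi_recurrence_of_neg (hq : q < 0) (x : ℝ) :
    psi q x = x * psi (q - 1) x + (1 - q) * psi (q - 2) x := by
  have hrec := psiIntegral_recurrence (neg_pos.2 hq) x
  have hΓ := (Real.Gamma_pos_of_pos (neg_pos.2 hq)).ne'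
  have hq0 : q ≠ 0 := hq.ne
  have hq1 : -q + 1 ≠ 0 := by linarith
  rw [psi_of_neg_s6 hq, psi_of_neg_s6 (by linarith : q - 1 < 0), psi_of_neg_s6 (by linarith : q - 2 < 0),
    show -(q - 1) = -q + 1 by ring, show -(q - 2) = -q + 1 + 1 by ring, add_sub_cancel_right,
    add_sub_cancel_right, Real.Gamma_add_one hq1,
    Real.Gamma_add_one (neg_ne_zero.2 hq0)]
  field_simp
  linear_combination (1 - q) * hrec

end Psi

section PsiOfLtOne

variable {p : ℝ}

lemma psi_recurrence_of_lt_one (hp : p < 1) (x : ℝ) :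
    psi p x = x * psi (p - 1) x + (1 - p) * psi (p - 2) x := by
  rcases lt_or_ge p 0 with hp0 | hp0
  · exact psi_recurrence_of_neg hp0 x
  · have h1 : p - 1 < 0 := by linarith
    have h2 : p - 2 < 0 := by linarith
    rw [psi_of_neg_s6 h1, psi_of_neg_s6 h2]
    show psiAux (⌈p⌉₊ + 1) p x = _
    rw [psiAux, if_neg (not_lt.2 hp0), psiAux_of_neg _ h1, psiAux_of_neg _ h2]

lemma hasDerivAt_psi (hp : p < 1) (x : ℝ) : HasDerivAt (psi p) (p * psi (p - 1) x) x := by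
  rcases lt_or_ge p 0 with hp0 | hp0
  · exact hasDerivAt_psi_of_neg hp0 x
  have h := ((hasDerivAt_id x).mul (hasDerivAt_psi_of_neg (by linarith : p - 1 < 0) x)).add
    ((hasDerivAt_psi_of_neg (by linarith : p - 2 < 0) x).const_mul (1 - p))
  have hrec := psi_recurrence_of_neg (by linarith : p - 1 < 0) x
  rw [show p - 1 - 1 = p - 2 by ring, show p - 1 - 2 = p - 3 by ring] at hrec
  rw [show p - 1 - 1 = p - 2 by ring, show p - 2 - 1 = p - 3 by ring] at h
  rw [show psi p = fun y => y * psi (p - 1) y + (1 - p) * psi (p - 2) y from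
    funext (psi_recurrence_of_lt_one hp)]
  refine h.congr_deriv ?_
  simp only [id]
  linear_combination (1 - p) * hrec

lemma continuous_psi (hp : p < 1) : Continuous (psi p) :=
  continuous_iff_continuousAt.2 fun x => (hasDerivAt_psi hp x).continuousAt

lemma psi_pos_of_nonneg (hp : p < 1) {y : ℝ} (hy : 0 ≤ y) : 0 < psi p y := by
  rw [psi_recurrence_of_lt_one hp]
  have h1 := psi_pos_of_neg (by linarith : p - 1 < 0) y
  have h2 := psi_pos_of_neg (by linarith : p - 2 < 0) y
  have : 0 < 1 - p := by linarith
  positivity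

lemma psi_le_tangent (hp0 : 0 ≤ p) (hp1 : p < 1) (a y : ℝ) :
    psi p y ≤ psi p a + p * psi (p - 1) a * (y - a) :=
  le_add_mul_sub_of_hasDerivAt_of_antitone (hasDerivAt_psi hp1)
    (fun _ _ h => mul_le_mul_of_nonneg_left (psi_antitone_of_neg (by linarith) h) hp0) a y

lemma psi_le_two_mul_rpow (hp0 : 0 ≤ p) (hp1 : p < 1) {y : ℝ} (hy : 1 ≤ y) :
    psi p y ≤ 2 * y ^ p := by
  have hy0 : 0 < y := by linarith
  have h1 := psi_le_rpow_of_neg (by linarith : p - 1 < 0) hy0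
  have h2 := psi_le_rpow_of_neg (by linarith : p - 2 < 0) hy0
  have h3 : y ^ (p - 2) ≤ y ^ p := Real.rpow_le_rpow_of_exponent_le hy (by linarith)
  have h4 : y * y ^ (p - 1) = y ^ p := by
    rw [mul_comm, ← Real.rpow_add_one hy0.ne', sub_add_cancel]
  have : 0 ≤ 1 - p := by linarith
  calc psi p y ≤ y * y ^ (p - 1) + (1 - p) * y ^ (p - 2) := by
        rw [psi_recurrence_of_lt_one hp1]
        gcongr
    _ ≤ 2 * y ^ p := by nlinarith [Real.rpow_nonneg hy0.le (p - 2)]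

lemma exists_psi_eq_zero (hp0 : 0 < p) (hp1 : p < 1) : ∃ z, psi p z = 0 := by
  set D := p * psi (p - 1) 0
  have hD : 0 < D := mul_pos hp0 (psi_pos_of_neg (by linarith) 0)
  have h0 : 0 < psi p 0 := psi_pos_of_nonneg hp1 le_rfl
  -- the tangent at `0` is negative at `z₀`, and `psi p` lies below it
  set z₀ := -(psi p 0 + 1) / D
  have hz₀ : z₀ ≤ 0 := div_nonpos_of_nonpos_of_nonneg (by linarith) hD.le
  have hψz₀ : psi p z₀ ≤ -1 := by
    have h := psi_le_tangent hp0.le hp1 0 z₀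
    rw [sub_zero, mul_div_cancel₀ _ hD.ne'] at h
    linarith
  obtain ⟨z, -, hz⟩ := intermediate_value_Icc hz₀ (continuous_psi hp1).continuousOn
    ⟨by linarith, h0.le⟩
  exact ⟨z, hz⟩

lemma mem_upperBounds_zero_setOf_psi_eq_zero (hp : p < 1) :
    0 ∈ upperBounds {x | psi p x = 0} :=
  fun _ hz => not_lt.1 fun h => (psi_pos_of_nonneg hp h.le).ne' hz

lemma cRoot_nonpos (hp0 : 0 < p) (hp1 : p < 1) : cRoot p ≤ 0 :=
  csSup_le (exists_psi_eq_zero hp0 hp1) (mem_upperBounds_zero_setOf_psi_eq_zero hp1)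

lemma psi_cRoot (hp0 : 0 < p) (hp1 : p < 1) : psi p (cRoot p) = 0 :=
  (isClosed_eq (continuous_psi hp1) continuous_const).csSup_mem (exists_psi_eq_zero hp0 hp1)
    ⟨0, mem_upperBounds_zero_setOf_psi_eq_zero hp1⟩

lemma exists_psi_le_mul_rpow_sub_cRoot (hp0 : 0 < p) (hp1 : p < 1) :
    ∃ A : ℝ, 0 < A ∧ ∀ y : ℝ, cRoot p ≤ y → psi p y ≤ A * (y - cRoot p) ^ p := by
  set c := cRoot p
  have hc : c ≤ 0 := cRoot_nonpos hp0 hp1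
  set M := p * psi (p - 1) c
  have hM : 0 < M := mul_pos hp0 (psi_pos_of_neg (by linarith) c)
  have hB : 0 ≤ M * (1 - c) ^ (1 - p) := mul_nonneg hM.le (Real.rpow_nonneg (by linarith) _)
  refine ⟨M * (1 - c) ^ (1 - p) + 2, by positivity, fun y hy => ?_⟩
  have hyc : 0 ≤ (y - c) ^ p := Real.rpow_nonneg (by linarith) _
  rcases le_or_gt y 1 with hy1 | hy1
  · calc psi p y ≤ M * (y - c) := by
          have h := psi_le_tangent hp0.le hp1 c y
          rwa [show psi p c = 0 from psi_cRoot hp0 hp1, zero_add] at h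
      _ ≤ M * ((1 - c) ^ (1 - p) * (y - c) ^ p) := by
          gcongr
          exact le_rpow_one_sub_mul_rpow (by linarith) (by linarith) hp1.le
      _ ≤ (M * (1 - c) ^ (1 - p) + 2) * (y - c) ^ p := by nlinarith
  · calc psi p y ≤ 2 * y ^ p := psi_le_two_mul_rpow hp0.le hp1 hy1.le
      _ ≤ 2 * (y - c) ^ p := by gcongr; linarith
      _ ≤ (M * (1 - c) ^ (1 - p) + 2) * (y - c) ^ p := by nlinarith

end PsiOfLtOne

lemma V_le_mul_rpow_of_psi_le {p c A : ℝ} (h : ∀ y, c ≤ y → psi p y ≤ A * (y - c) ^ p)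
    {t x : ℝ} (ht : 0 < t) (hx : c * √t ≤ x) : V p x t ≤ A * (x - c * √t) ^ p := by
  have hst : 0 < √t := Real.sqrt_pos.2 ht
  have hy : c ≤ x / √t := (le_div_iff₀ hst).2 hx
  have htp : t ^ (p / 2) = √t ^ p := by
    rw [Real.sqrt_eq_rpow, ← Real.rpow_mul ht.le]
    ring_nf
  have hscale : √t ^ p * (x / √t - c) ^ p = (x - c * √t) ^ p := by
    rw [← Real.mul_rpow hst.le (sub_nonneg.2 hy)]
    field_simp
  rw [V, if_neg ht.ne', htp]
  calc √t ^ p * psi p (x / √t) ≤ √t ^ p * (A * (x / √t - c) ^ p) := by gcongr; exact h _ hy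
    _ = A * (x - c * √t) ^ p := by rw [← hscale]; ring

/-- Lemma 4: for `p ∈ (0,1)`, `V_p(x,t) ≤ A(p) (x - c(p)√t)^p` on `x ≥ c(p)√t`. -/
theorem V_bound_p_in_01 (p : ℝ) (hp0 : 0 < p) (hp1 : p < 1) :
    ∃ A : ℝ, 0 < A ∧ ∀ t : ℝ, 0 < t → ∀ x : ℝ, cRoot p * Real.sqrt t ≤ x →
      V p x t ≤ A * (x - cRoot p * Real.sqrt t) ^ p := by
  obtain ⟨A, hA, h⟩ := exists_psi_le_mul_rpow_sub_cRoot hp0 hp1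
  exact ⟨A, hA, fun t ht x hx => V_le_mul_rpow_of_psi_le h ht hx⟩
end
end
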